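/- arXiv:2507.14362 — 5 statements merged into one kernel-verified Lean document; each statement's English description precedes it below -/
import Mathlib

section
/- Let n ≥ 2, p ∈ (0,1], and let A = sup_{z>0} (z+1)|1/(e^z-1) - 1/z| < ∞. For x₁,…,xₙ ∈ [0,1] with s = Σᵢ xᵢ > 0 and sⱼ = s - xⱼ > 0 for each j, one has ∏_{j=1}^n F(sⱼ p) ≤ e^A · F(sp)^n, where F(z) = (1-e^{-z})/z. -/
/-!
`t ↦ log F t + A log (t + 1)` is nondecreasing on `(0, ∞)`, because its derivative is
`(log F)'(t) + A / (t + 1)` and `(log F)'(t) = 1/(eᵗ - 1) - 1/t` is at least `-A / (t + 1)` by the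
definition of `A`. Comparing `sⱼ p` with `s p` therefore costs at most a factor
`exp (A · log ((sp + 1)/(sⱼp + 1))) ≤ exp (A · xⱼ / s)`, and these factors multiply to `e^A`
since `∑ⱼ xⱼ / s = 1`.
-/

open Real

noncomputable def F (z : ℝ) : ℝ := (1 - Real.exp (-z)) / z

/-- The constant `A = sup_{z>0} (z+1)|1/(e^z-1) - 1/z|`. -/
noncomputable def Aconst : ℝ :=
  sSup {y : ℝ | ∃ z : ℝ, 0 < z ∧ y = (z + 1) * |1 / (Real.exp z - 1) - 1 / z|}

lemma exp_neg_lt_one {z : ℝ} (hz : 0 < z) : Real.exp (-z) < 1 :=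
  Real.exp_lt_one_iff.mpr (neg_lt_zero.mpr hz)

lemma F_pos {z : ℝ} (hz : 0 < z) : 0 < F z :=
  div_pos (sub_pos.mpr (exp_neg_lt_one hz)) hz

lemma inv_exp_sub_one_lt_inv {z : ℝ} (hz : 0 < z) : 1 / (Real.exp z - 1) < 1 / z :=
  one_div_lt_one_div_of_lt hz (by linarith [Real.add_one_lt_exp hz.ne'])

lemma inv_sub_inv_exp_sub_one_le_one {z : ℝ} (hz : 0 < z) :
    1 / z - 1 / (Real.exp z - 1) ≤ 1 := by
  have hE : 0 < Real.exp z - 1 := by linarith [Real.add_one_lt_exp hz.ne']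
  have hexp : Real.exp z * (1 - z) ≤ 1 := by
    have h := (Real.one_sub_lt_exp_neg hz.ne').le
    calc Real.exp z * (1 - z) ≤ Real.exp z * Real.exp (-z) := by gcongr
      _ = 1 := by rw [← Real.exp_add, add_neg_cancel, Real.exp_zero]
  rw [div_sub_div _ _ hz.ne' hE.ne', div_le_one (by positivity)]
  linarith

lemma add_one_mul_abs_inv_exp_sub_one_sub_inv_le_two {z : ℝ} (hz : 0 < z) :
    (z + 1) * |1 / (Real.exp z - 1) - 1 / z| ≤ 2 := by
  have hlt := inv_exp_sub_one_lt_inv hz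
  have hle := inv_sub_inv_exp_sub_one_le_one hz
  have hE : 0 < 1 / (Real.exp z - 1) := by
    have := Real.add_one_lt_exp hz.ne'
    exact one_div_pos.mpr (by linarith)
  rw [abs_of_neg (sub_neg.mpr hlt), neg_sub]
  rcases le_or_gt 1 z with hz1 | hz1
  · have hzinv : (z + 1) * (1 / z) ≤ 2 := by
      rw [← div_eq_mul_one_div, div_le_iff₀ hz]; linarith
    nlinarith
  · nlinarith

lemma le_Aconst {z : ℝ} (hz : 0 < z) :
    (z + 1) * |1 / (Real.exp z - 1) - 1 / z| ≤ Aconst := by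
  refine le_csSup ⟨2, ?_⟩ ⟨z, hz, rfl⟩
  rintro y ⟨z, hz, rfl⟩
  exact add_one_mul_abs_inv_exp_sub_one_sub_inv_le_two hz

lemma Aconst_nonneg : 0 ≤ Aconst :=
  le_trans (by positivity) (le_Aconst one_pos)

lemma hasDerivAt_log_F {z : ℝ} (hz : 0 < z) :
    HasDerivAt (fun t => Real.log (F t)) (1 / (Real.exp z - 1) - 1 / z) z := by
  have hnum : HasDerivAt (fun t => Real.log (1 - Real.exp (-t)))
      (Real.exp (-z) / (1 - Real.exp (-z))) z := by
    have h := ((Real.hasDerivAt_exp (-z)).comp z (hasDerivAt_neg z)).const_sub 1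
    simpa [Function.comp_def] using h.log (sub_pos.mpr (exp_neg_lt_one hz)).ne'
  have hsplit : (fun t => Real.log (1 - Real.exp (-t)) - Real.log t) =ᶠ[nhds z]
      fun t => Real.log (F t) := by
    filter_upwards [Ioi_mem_nhds hz] with t ht
    rw [F, Real.log_div (sub_pos.mpr (exp_neg_lt_one ht)).ne' (ne_of_gt ht)]
  have hval : Real.exp (-z) / (1 - Real.exp (-z)) = 1 / (Real.exp z - 1) := by
    have := Real.add_one_lt_exp hz.ne'
    rw [Real.exp_neg]
    field_simp
  have hden := Real.hasDerivAt_log hz.ne'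
  rw [← one_div] at hden
  rw [← hval]
  exact (hnum.sub hden).congr_of_eventuallyEq hsplit.symm

lemma monotoneOn_log_F_add_Aconst_mul_log :
    MonotoneOn (fun t => Real.log (F t) + Aconst * Real.log (t + 1)) (Set.Ioi 0) := by
  have hderiv : ∀ t : ℝ, 0 < t → HasDerivAt (fun t => Real.log (F t) + Aconst * Real.log (t + 1))
      ((1 / (Real.exp t - 1) - 1 / t) + Aconst * (1 / (t + 1))) t := fun t ht =>
    (hasDerivAt_log_F ht).add
      ((((hasDerivAt_id t).add_const 1).log (by rw [id]; linarith)).const_mul Aconst)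
  refine monotoneOn_of_deriv_nonneg (convex_Ioi 0)
    (fun t ht => (hderiv t ht).continuousAt.continuousWithinAt)
    (fun t ht => ?_) (fun t ht => ?_) <;> rw [interior_Ioi] at ht
  · exact (hderiv t ht).differentiableAt.differentiableWithinAt
  · rw [(hderiv t ht).deriv]
    have hA : |1 / (Real.exp t - 1) - 1 / t| ≤ Aconst * (1 / (t + 1)) := by
      rw [← div_eq_mul_one_div, le_div_iff₀ (by linarith [Set.mem_Ioi.mp ht]), mul_comm]
      exact le_Aconst ht
    linarith [neg_abs_le (1 / (Real.exp t - 1) - 1 / t)]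

lemma F_le_mul_exp {a b : ℝ} (ha : 0 < a) (hab : a ≤ b) :
    F a ≤ F b * Real.exp (Aconst * ((b - a) / (a + 1))) := by
  have hb : 0 < b := ha.trans_le hab
  have hmono := monotoneOn_log_F_add_Aconst_mul_log (Set.mem_Ioi.mpr ha) (Set.mem_Ioi.mpr hb) hab
  have hlog : Real.log (b + 1) - Real.log (a + 1) ≤ (b - a) / (a + 1) := by
    rw [← Real.log_div (by linarith) (by linarith)]
    calc Real.log ((b + 1) / (a + 1)) ≤ (b + 1) / (a + 1) - 1 :=
          Real.log_le_sub_one_of_pos (by positivity)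
      _ = (b - a) / (a + 1) := by field_simp; ring
  have hlogF : Real.log (F a) ≤ Real.log (F b) + Aconst * ((b - a) / (a + 1)) := by
    nlinarith [mul_le_mul_of_nonneg_left hlog Aconst_nonneg]
  calc F a = Real.exp (Real.log (F a)) := (Real.exp_log (F_pos ha)).symm
    _ ≤ Real.exp (Real.log (F b) + Aconst * ((b - a) / (a + 1))) := Real.exp_le_exp.mpr hlogF
    _ = F b * Real.exp (Aconst * ((b - a) / (a + 1))) := by
      rw [Real.exp_add, Real.exp_log (F_pos hb)]

lemma prod_le_exp_mul_pow {ι : Type*} [Fintype ι] {f w : ι → ℝ} {c C : ℝ}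
    (hf : ∀ i, 0 ≤ f i) (hfc : ∀ i, f i ≤ c * Real.exp (C * w i)) (hw : ∑ i, w i = 1) :
    ∏ i, f i ≤ Real.exp C * c ^ Fintype.card ι :=
  calc ∏ i, f i ≤ ∏ i, c * Real.exp (C * w i) :=
        Finset.prod_le_prod (fun i _ => hf i) (fun i _ => hfc i)
    _ = Real.exp C * c ^ Fintype.card ι := by
      rw [Finset.prod_mul_distrib, Finset.prod_const, ← Real.exp_sum, ← Finset.mul_sum, hw,
        mul_one, mul_comm, Finset.card_univ]

theorem prod_F_le_general (n : ℕ) (p : ℝ) (hp : p ∈ Set.Ioc (0 : ℝ) 1)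
    (x : Fin n → ℝ) (hx : ∀ i, x i ∈ Set.Icc (0 : ℝ) 1)
    (s : ℝ) (hs : s = ∑ i, x i) (hspos : 0 < s)
    (hsj : ∀ j, 0 < s - x j) :
    ∏ j, F ((s - x j) * p) ≤ Real.exp Aconst * (F (s * p)) ^ n := by
  obtain ⟨hp0, hp1⟩ := hp
  have hstep : ∀ j, F ((s - x j) * p) ≤ F (s * p) * Real.exp (Aconst * (x j / s)) := by
    intro j
    obtain ⟨hx0, hx1⟩ := hx j
    have hsjp : 0 < (s - x j) * p := mul_pos (hsj j) hp0
    -- `s p ≤ sⱼ p + 1` because `xⱼ p ≤ 1`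
    have hratio : (s * p - (s - x j) * p) / ((s - x j) * p + 1) ≤ x j / s := by
      rw [div_le_div_iff₀ (by positivity) hspos]
      nlinarith [mul_le_one₀ hx1 hp0.le hp1, mul_nonneg hx0 hp0.le]
    refine (F_le_mul_exp (b := s * p) hsjp (by nlinarith)).trans ?_
    gcongr
    exacts [(F_pos (mul_pos hspos hp0)).le, Aconst_nonneg]
  have hweights : ∑ j, x j / s = 1 := by rw [← Finset.sum_div, ← hs, div_self hspos.ne']
  simpa using prod_le_exp_mul_pow (fun j => (F_pos (mul_pos (hsj j) hp0)).le) hstep hweights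

/-- For `n ≥ 2`, `p ∈ (0,1]`, and `x₁,…,xₙ ∈ [0,1]` with `s = Σᵢ xᵢ > 0` and
`sⱼ = s - xⱼ > 0` for each `j`, one has `∏ⱼ F(sⱼ p) ≤ e^A · F(sp)^n`. -/
theorem prod_F_le (n : ℕ) (hn : 2 ≤ n) (p : ℝ) (hp : p ∈ Set.Ioc (0 : ℝ) 1)
    (x : Fin n → ℝ) (hx : ∀ i, x i ∈ Set.Icc (0 : ℝ) 1)
    (s : ℝ) (hs : s = ∑ i, x i) (hspos : 0 < s)
    (hsj : ∀ j, 0 < s - x j) :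
    ∏ j, F ((s - x j) * p) ≤ Real.exp Aconst * (F (s * p)) ^ n :=
  prod_F_le_general n p hp x hx s hs hspos hsj
end

section
/- The density of the sum S_ℓ of ℓ i.i.d. uniform [0,1] random variables equals f_ℓ(s) = (s^{ℓ-1}/(ℓ-1)!) · P(max_{j∈[ℓ]} L_j ≤ 1/s), where (L₁,…,L_ℓ) are the lengths of the ℓ consecutive intervals obtained by choosing ℓ-1 points independently and uniformly at random in [0,1]. -/
open MeasureTheory

/-- The sorted tuple of the points `u`. -/
noncomputable def sortedPts {m : ℕ} (u : Fin m → ℝ) : Fin m → ℝ := u ∘ Tuple.sort u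

/-- The `ℓ = m+1` spacings (consecutive gaps, including endpoints `0` and `1`) determined
by `m` points in `[0,1]`. -/
noncomputable def spacing {m : ℕ} (u : Fin m → ℝ) (j : Fin (m + 1)) : ℝ :=
  (if h : (j : ℕ) < m then sortedPts u ⟨j, h⟩ else 1) -
    (if h2 : 0 < (j : ℕ) then sortedPts u ⟨(j : ℕ) - 1, by have := j.isLt; omega⟩ else 0)

/-- The maximal spacing. -/
noncomputable def maxSpacing {m : ℕ} (u : Fin m → ℝ) : ℝ :=
  Finset.univ.sup' ⟨0, Finset.mem_univ 0⟩ (spacing u)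

open Set
open scoped ENNReal Nat

/-!
Splitting off one coordinate, the law of `S_{m+1}` is the convolution of the uniform law on
`[0,1]` with the law of `S_m`, so its density at `s` is the volume of the slab
`{x ∈ [0,1]^m | s - 1 ≤ ∑ xᵢ ≤ s}`. For `s > 0` the linear map
`v ↦ s • (v₀, v₁ - v₀, …, v_{m-1} - v_{m-2})`, of determinant `s^m`, maps the nondecreasing `v`
whose `m + 1` spacings all lie in `[0, 1/s]` onto this slab. Finally
`{u ∈ [0,1]^m | max_j L_j(u) ≤ 1/s}` is the union of the `m!` copies of that set obtained by
permuting coordinates, which overlap only on the null set of tuples with a repeated coordinate.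
-/

namespace IrwinHall

theorem withDensity_conv {G : Type*} [AddGroup G] [MeasurableSpace G] [MeasurableAdd₂ G]
    [MeasurableSub₂ G] (μ : Measure G) [SFinite μ] [μ.IsAddRightInvariant] {f : G → ℝ≥0∞}
    (hf : Measurable f) (ρ : Measure G) [SFinite ρ] :
    μ.withDensity f ∗ ρ = μ.withDensity fun z ↦ ∫⁻ y, f (z - y) ∂ρ := by
  ext E hE
  have hind : Measurable (E.indicator (1 : G → ℝ≥0∞)) := measurable_one.indicator hE
  calc (μ.withDensity f ∗ ρ) E
      = ∫⁻ x, f x * ∫⁻ y, E.indicator 1 (x + y) ∂ρ ∂μ := by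
        rw [← lintegral_indicator_one hE, Measure.lintegral_conv hind,
          lintegral_withDensity_eq_lintegral_mul _ hf (by fun_prop)]
        rfl
    _ = ∫⁻ y, ∫⁻ x, f x * E.indicator 1 (x + y) ∂μ ∂ρ := by
        refine (lintegral_congr fun x ↦
          (lintegral_const_mul _ (hind.comp (measurable_const_add x))).symm).trans ?_
        exact lintegral_lintegral_swap (by fun_prop)
    _ = ∫⁻ y, ∫⁻ z, E.indicator 1 z * f (z - y) ∂μ ∂ρ := by
        refine lintegral_congr fun y ↦ ?_
        rw [← lintegral_sub_right_eq_self _ y]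
        simp [mul_comm]
    _ = ∫⁻ z in E, ∫⁻ y, f (z - y) ∂ρ ∂μ := by
        rw [lintegral_lintegral_swap (by fun_prop), ← lintegral_indicator hE]
        refine lintegral_congr fun z ↦ ?_
        by_cases hz : z ∈ E <;> simp [hz]
    _ = _ := (withDensity_apply _ hE).symm

theorem map_sum_pi_succ {M : Type*} [AddCommMonoid M] [MeasurableSpace M] [MeasurableAdd₂ M]
    (ν : Measure M) [SigmaFinite ν] (m : ℕ) :
    (Measure.pi fun _ : Fin (m + 1) ↦ ν).map (fun x ↦ ∑ i, x i) =
      ν ∗ (Measure.pi fun _ : Fin m ↦ ν).map (fun x ↦ ∑ i, x i) := by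
  have hsum : Measurable fun x : Fin m → M ↦ ∑ i, x i := by fun_prop
  have hsplit : (fun x : Fin (m + 1) → M ↦ ∑ i, x i) =
      ((fun p : M × M ↦ p.1 + p.2) ∘ Prod.map id fun x : Fin m → M ↦ ∑ i, x i) ∘
        MeasurableEquiv.piFinSuccAbove (fun _ ↦ M) 0 := by
    ext x
    simp [Fin.sum_univ_succ, Fin.tail]
  have hprod := Measure.map_prod_map ν (Measure.pi fun _ : Fin m ↦ ν) measurable_id hsum
  rw [Measure.map_id] at hprod
  rw [Measure.conv, hprod, Measure.map_map (by fun_prop) (by fun_prop),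
    ← (measurePreserving_piFinSuccAbove (fun _ ↦ ν) 0).map_eq,
    Measure.map_map (by fun_prop) (MeasurableEquiv.measurable _), hsplit]

theorem sum_succ_sub_castSucc {M : Type*} [AddCommGroup M] {n : ℕ} (v : Fin (n + 1) → M) :
    ∑ i : Fin n, (v i.succ - v i.castSucc) = v (Fin.last n) - v 0 := by
  induction n with
  | zero => simp
  | succ n ih =>
    rw [Fin.sum_univ_castSucc]
    have hinit := ih (fun i ↦ v i.castSucc)
    simp only [Fin.succ_castSucc, Fin.castSucc_zero] at hinit ⊢
    rw [hinit, Fin.succ_last]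
    abel

theorem mul_mem_Icc_zero_one_iff {s a : ℝ} (hs : 0 < s) : s * a ∈ Icc 0 1 ↔ a ∈ Icc 0 (1 / s) := by
  rw [mem_Icc, mem_Icc, le_div_iff₀' hs, mul_nonneg_iff_of_pos_left hs]

noncomputable def gap {m : ℕ} (v : Fin m → ℝ) (j : Fin (m + 1)) : ℝ :=
  (if h : (j : ℕ) < m then v ⟨j, h⟩ else 1) -
    (if h2 : 0 < (j : ℕ) then v ⟨(j : ℕ) - 1, by have := j.isLt; omega⟩ else 0)

theorem spacing_eq_gap {m : ℕ} (u : Fin m → ℝ) : spacing u = gap (sortedPts u) := rfl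

section succ

variable {n : ℕ} (v : Fin (n + 1) → ℝ)

theorem gap_zero : gap v 0 = v 0 := by simp [gap]

theorem gap_succ_castSucc (i : Fin n) : gap v i.succ.castSucc = v i.succ - v i.castSucc := by
  simp [gap, Fin.succ, Fin.castSucc, Fin.castAdd, Fin.castLE]

theorem gap_last : gap v (Fin.last (n + 1)) = 1 - v (Fin.last n) := by
  simp [gap, Fin.last]

end succ

theorem gap_nonneg_iff {m : ℕ} (v : Fin m → ℝ) :
    (∀ j, 0 ≤ gap v j) ↔ Monotone v ∧ ∀ i, v i ∈ Icc 0 1 := by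
  cases m with
  | zero => simp [gap, Subsingleton.monotone]
  | succ n =>
    rw [Fin.forall_fin_succ, Fin.forall_fin_succ']
    simp only [Fin.succ_castSucc, Fin.succ_last, gap_zero, gap_succ_castSucc, gap_last, sub_nonneg,
      ← Fin.monotone_iff_le_succ]
    constructor
    · rintro ⟨h0, hmono, h1⟩
      exact ⟨hmono, fun i ↦ ⟨h0.trans (hmono (Fin.zero_le i)), (hmono (Fin.le_last i)).trans h1⟩⟩
    · rintro ⟨hmono, hI⟩
      exact ⟨(hI 0).1, hmono, (hI _).2⟩

theorem gap_castSucc {m : ℕ} (v : Fin m → ℝ) (i : Fin m) :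
    gap v i.castSucc = v i - if h : 0 < (i : ℕ) then v ⟨i - 1, by omega⟩ else 0 := by
  simp [gap]

noncomputable def gapDiff (m : ℕ) : (Fin m → ℝ) →ₗ[ℝ] Fin m → ℝ where
  toFun v i := gap v i.castSucc
  map_add' v w := by
    ext i
    simp only [gap_castSucc, Pi.add_apply]
    split_ifs <;> ring
  map_smul' c v := by
    ext i
    simp only [gap_castSucc, Pi.smul_apply, smul_eq_mul, RingHom.id_apply]
    split_ifs <;> ring

theorem gapDiff_apply {m : ℕ} (v : Fin m → ℝ) (i : Fin m) : gapDiff m v i = gap v i.castSucc :=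
  rfl

theorem det_gapDiff (m : ℕ) : LinearMap.det (gapDiff m) = 1 := by
  have hlower : (LinearMap.toMatrix' (gapDiff m)).IsLowerTriangular := by
    intro i j (hij : i < j)
    simp only [LinearMap.toMatrix'_apply, gapDiff_apply, gap_castSucc, Pi.single_apply,
      Fin.ext_iff, dite_eq_ite]
    split_ifs <;> simp <;> omega
  rw [← LinearMap.det_toMatrix', Matrix.det_of_isLowerTriangular _ hlower]
  refine Finset.prod_eq_one fun i _ ↦ ?_
  simp only [LinearMap.toMatrix'_apply, gapDiff_apply, gap_castSucc, Pi.single_eq_same,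
    Pi.single_apply, Fin.ext_iff, dite_eq_ite, sub_eq_self, ite_eq_right_iff, one_ne_zero,
    imp_false]
  omega

theorem gap_last_eq_one_sub_sum {m : ℕ} (v : Fin m → ℝ) :
    gap v (Fin.last m) = 1 - ∑ i, gapDiff m v i := by
  cases m with
  | zero => simp [gap]
  | succ n =>
    rw [gap_last, Fin.sum_univ_succ]
    simp only [gapDiff_apply, Fin.castSucc_zero, gap_zero, gap_succ_castSucc, sum_succ_sub_castSucc]
    ring

def boundedGaps (m : ℕ) (c : ℝ) : Set (Fin m → ℝ) := {v | ∀ j, gap v j ∈ Icc 0 c}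

theorem measurable_gap {m : ℕ} (j : Fin (m + 1)) : Measurable fun v : Fin m → ℝ ↦ gap v j := by
  unfold gap
  split_ifs <;> fun_prop

theorem measurableSet_boundedGaps (m : ℕ) (c : ℝ) : MeasurableSet (boundedGaps m c) := by
  simp only [boundedGaps, ofPred_forall]
  exact .iInter fun j ↦ measurable_gap j measurableSet_Icc

theorem monotone_of_mem_boundedGaps {m : ℕ} {c : ℝ} {v : Fin m → ℝ} (hv : v ∈ boundedGaps m c) :
    Monotone v :=
  ((gap_nonneg_iff v).1 fun j ↦ (hv j).1).1

theorem boundedGaps_eq_empty {m : ℕ} {c : ℝ} (hc : c < 0) : boundedGaps m c = ∅ :=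
  eq_empty_of_forall_notMem fun _ hv ↦ hc.not_ge ((hv 0).1.trans (hv 0).2)

theorem maxSpacing_le_iff {m : ℕ} {u : Fin m → ℝ} {c : ℝ} :
    maxSpacing u ≤ c ↔ ∀ j, spacing u j ≤ c :=
  (Finset.sup'_le_iff _ _).trans (by simp)

theorem preimage_sortedPts_boundedGaps (m : ℕ) (c : ℝ) :
    sortedPts ⁻¹' boundedGaps m c = {u | maxSpacing u ≤ c} ∩ univ.pi fun _ ↦ Icc 0 1 := by
  ext u
  have hcube : (∀ j, 0 ≤ spacing u j) ↔ ∀ i, u i ∈ Icc 0 1 := by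
    rw [spacing_eq_gap, gap_nonneg_iff, sortedPts]
    exact ⟨fun h ↦ (Tuple.sort u).forall_congr_right.1 h.2,
      fun h ↦ ⟨Tuple.monotone_sort u, fun i ↦ h _⟩⟩
  simp only [boundedGaps, mem_preimage, mem_inter_iff, mem_ofPred_eq, mem_univ_pi]
  rw [maxSpacing_le_iff, ← hcube, ← spacing_eq_gap]
  simp only [mem_Icc, forall_and]
  tauto

theorem preimage_smul_gapDiff {m : ℕ} {s : ℝ} (hs : 0 < s) :
    (s • gapDiff m) ⁻¹' ({x | s - ∑ i, x i ∈ Icc 0 1} ∩ univ.pi fun _ ↦ Icc 0 1) =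
      boundedGaps m (1 / s) := by
  ext v
  have hlast : s - ∑ i, s * gapDiff m v i = s * gap v (Fin.last m) := by
    rw [gap_last_eq_one_sub_sum, ← Finset.mul_sum]
    ring
  simp only [boundedGaps, mem_preimage, mem_inter_iff, mem_ofPred_eq, mem_univ_pi,
    LinearMap.smul_apply, Pi.smul_apply, smul_eq_mul]
  rw [hlast, Fin.forall_fin_succ']
  simp only [mul_mem_Icc_zero_one_iff hs, gapDiff_apply]
  tauto

theorem volume_setOf_not_injective {ι : Type*} [Fintype ι] :
    volume {u : ι → ℝ | ¬ Function.Injective u} = 0 := by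
  classical
  have hsub : {u : ι → ℝ | ¬ Function.Injective u} ⊆
      ⋃ i, ⋃ j, ⋃ (_ : i ≠ j),
        (((LinearMap.proj i : (ι → ℝ) →ₗ[ℝ] ℝ) - LinearMap.proj j).ker : Set (ι → ℝ)) := by
    intro u hu
    obtain ⟨i, j, hij, hne⟩ := Function.not_injective_iff.1 hu
    simpa [sub_eq_zero] using ⟨i, j, hne, hij⟩
  refine measure_mono_null hsub (measure_iUnion_null fun i ↦ measure_iUnion_null fun j ↦
    measure_iUnion_null fun hij ↦ Measure.addHaar_submodule _ _ fun htop ↦ ?_)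
  have hsingle := LinearMap.ext_iff.1 (LinearMap.ker_eq_top.1 htop) (Pi.single i 1)
  simp [hij.symm] at hsingle

theorem volume_preimage_sortedPts {m : ℕ} {G : Set (Fin m → ℝ)} (hG : MeasurableSet G)
    (hmono : ∀ v ∈ G, Monotone v) : volume (sortedPts ⁻¹' G) = m ! * volume G := by
  have hperm (σ : Equiv.Perm (Fin m)) :
      MeasurePreserving (fun u : Fin m → ℝ ↦ u ∘ σ) volume volume :=
    volume_preserving_arrowCongr' σ.symm (MeasurableEquiv.refl ℝ) (.id volume)
  have hunion : sortedPts ⁻¹' G = ⋃ σ : Equiv.Perm (Fin m), (· ∘ σ) ⁻¹' G := by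
    ext u
    simp only [mem_preimage, mem_iUnion]
    refine ⟨fun h ↦ ⟨Tuple.sort u, h⟩, fun ⟨σ, hσ⟩ ↦ ?_⟩
    rwa [sortedPts, Tuple.unique_monotone (Tuple.monotone_sort u) (hmono _ hσ)]
  have hdisj : Pairwise (Function.onFun (AEDisjoint volume)
      fun σ : Equiv.Perm (Fin m) ↦ (· ∘ σ) ⁻¹' G) := by
    intro σ τ hστ
    refine measure_mono_null ?_ volume_setOf_not_injective
    rintro u ⟨hσ, hτ⟩ hinj
    have hστu : u ∘ σ = u ∘ τ := Tuple.unique_monotone (hmono _ hσ) (hmono _ hτ)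
    exact hστ (Equiv.ext fun i ↦ hinj (congrFun hστu i))
  rw [hunion, measure_iUnion₀ hdisj fun σ ↦ (hG.preimage (hperm σ).measurable).nullMeasurableSet,
    tsum_fintype]
  simp [(hperm _).measure_preimage hG.nullMeasurableSet, Fintype.card_perm]

theorem volume_sum_mem_Icc_inter_cube {m : ℕ} {s : ℝ} (hs : 0 < s) :
    volume ({x : Fin m → ℝ | s - ∑ i, x i ∈ Icc 0 1} ∩ univ.pi fun _ ↦ Icc 0 1) =
      ENNReal.ofReal (s ^ m) * volume (boundedGaps m (1 / s)) := by
  have hdet : LinearMap.det (s • gapDiff m) = s ^ m := by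
    rw [LinearMap.det_smul, det_gapDiff, mul_one, Module.finrank_fin_fun]
  rw [← preimage_smul_gapDiff hs, Measure.addHaar_preimage_linearMap _ (by rw [hdet]; positivity),
    hdet, ← mul_assoc, ← ENNReal.ofReal_mul (by positivity), abs_of_pos (by positivity),
    mul_inv_cancel₀ (by positivity), ENNReal.ofReal_one, one_mul]

noncomputable abbrev uniformCube (m : ℕ) : Measure (Fin m → ℝ) :=
  Measure.pi fun _ ↦ volume.restrict (Icc 0 1)

theorem uniformCube_eq_restrict (m : ℕ) :
    uniformCube m = volume.restrict (univ.pi fun _ ↦ Icc 0 1) := by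
  rw [uniformCube, ← Measure.restrict_pi_pi, volume_pi]

theorem uniformCube_sum_mem_Icc (m : ℕ) {s : ℝ} (hs : s ≠ 0) :
    uniformCube m {x | s - ∑ i, x i ∈ Icc 0 1} =
      ENNReal.ofReal (s ^ m / m !) * uniformCube m {u | maxSpacing u ≤ 1 / s} := by
  have hcube : MeasurableSet (univ.pi fun _ : Fin m ↦ Icc (0 : ℝ) 1) :=
    .univ_pi fun _ ↦ measurableSet_Icc
  rw [uniformCube_eq_restrict, Measure.restrict_apply' hcube, Measure.restrict_apply' hcube,
    ← preimage_sortedPts_boundedGaps,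
    volume_preimage_sortedPts (measurableSet_boundedGaps _ _) fun _ ↦ monotone_of_mem_boundedGaps]
  rcases hs.lt_or_gt with hneg | hpos
  · have hempty : {x : Fin m → ℝ | s - ∑ i, x i ∈ Icc 0 1} ∩ univ.pi (fun _ ↦ Icc 0 1) = ∅ := by
      refine eq_empty_of_forall_notMem fun x ⟨hsum, hx⟩ ↦ ?_
      have : 0 ≤ ∑ i, x i := Finset.sum_nonneg fun i _ ↦ (hx i (mem_univ i)).1
      linarith [hsum.1]
    rw [hempty, boundedGaps_eq_empty (one_div_neg.2 hneg)]
    simp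
  · rw [volume_sum_mem_Icc_inter_cube hpos, ← mul_assoc, ENNReal.ofReal_div_of_pos (by positivity),
      ENNReal.ofReal_natCast, ENNReal.div_mul_cancel (by positivity) (by simp)]

theorem measurable_uniformCube_sum_mem_Icc (m : ℕ) :
    Measurable fun s ↦ uniformCube m {x | s - ∑ i, x i ∈ Icc 0 1} :=
  measurable_measure_prodMk_left <|
    (by fun_prop : Measurable fun p : ℝ × (Fin m → ℝ) ↦ p.1 - ∑ i, p.2 i) measurableSet_Icc

theorem map_sum_uniformCube (m : ℕ) :
    (uniformCube (m + 1)).map (fun x ↦ ∑ i, x i) =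
      volume.withDensity fun s ↦ uniformCube m {x | s - ∑ i, x i ∈ Icc 0 1} := by
  have hind : Measurable ((Icc (0 : ℝ) 1).indicator (1 : ℝ → ℝ≥0∞)) :=
    measurable_one.indicator measurableSet_Icc
  rw [uniformCube, map_sum_pi_succ]
  nth_rw 1 [← withDensity_indicator_one measurableSet_Icc]
  rw [withDensity_conv volume hind]
  congr with s
  rw [lintegral_map (f := fun y ↦ (Icc (0 : ℝ) 1).indicator 1 (s - y))
    (hind.comp (measurable_const_sub s)) (by fun_prop)]
  exact lintegral_indicator_const_comp (by fun_prop) measurableSet_Icc 1 |>.trans (one_mul _)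

end IrwinHall

/-- The density of the sum of `ℓ = m+1` i.i.d. uniform `[0,1]` random variables equals
`(s^{ℓ-1}/(ℓ-1)!) · P(max_{j∈[ℓ]} L_j ≤ 1/s)` where `L₁,…,L_ℓ` are the spacings of
`ℓ-1` i.i.d. uniform points in `[0,1]`. -/
theorem pdf_sum_uniform_eq (m : ℕ) :
    let P : Measure (Fin (m + 1) → ℝ) :=
      Measure.pi fun _ => volume.restrict (Set.Icc (0 : ℝ) 1)
    let Ppts : Measure (Fin m → ℝ) :=
      Measure.pi fun _ => volume.restrict (Set.Icc (0 : ℝ) 1)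
    ∀ᵐ s ∂(volume : Measure ℝ),
      pdf (fun x : Fin (m + 1) → ℝ => ∑ i, x i) P volume s =
        ENNReal.ofReal (s ^ m / (Nat.factorial m)) *
          Ppts {u | maxSpacing u ≤ 1 / s} := by
  intro P Ppts
  have hpdf : pdf (fun x : Fin (m + 1) → ℝ ↦ ∑ i, x i) P volume =ᵐ[volume]
      fun s ↦ IrwinHall.uniformCube m {x | s - ∑ i, x i ∈ Icc 0 1} := by
    rw [pdf_def, show P.map _ = _ from IrwinHall.map_sum_uniformCube m]
    exact Measure.rnDeriv_withDensity _ (IrwinHall.measurable_uniformCube_sum_mem_Icc m)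
  filter_upwards [hpdf, Measure.ae_ne volume 0] with s hs hs0
  rw [hs]
  exact IrwinHall.uniformCube_sum_mem_Icc m hs0
end

section
/- Let L_ℓ⁺ be the maximal spacing of ℓ-1 i.i.d. uniform points in [0,1]. For every ρ > 0 and every d ∈ (0, e^ρ - 1), P(L_ℓ⁺ ≤ ℓ^{-1}(log(ℓ/log ℓ) - ρ)) = O(ℓ^{-d}) as ℓ → ∞. -/
open MeasureTheory Filter

noncomputable def Ppts (m : ℕ) : Measure (Fin m → ℝ) :=
  Measure.pi fun _ => volume.restrict (Set.Icc (0 : ℝ) 1)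

/-!
The spacing vector of the sorted points lies in the capped simplex `{g ∈ [0, x]ᵐ | ∑ g ≤ 1}`, and the
map "points ↦ first `m` spacings" is unimodular, so `P(L⁺ ≤ x)` is at most `m!` times the volume of
that simplex. The Chernoff bound `1 ≤ e^{ℓ (1 - ∑ g)}`, `ℓ = m + 1`, bounds this volume by
`e^ℓ ((1 - e^{-ℓx}) / ℓ)ᵐ`, and Stirling's upper bound on `m!` turns the product into
`e² √ℓ exp (-ℓ e^{-ℓx})`. At `x = ℓ⁻¹ (log (ℓ / log ℓ) - ρ)` one has `ℓ e^{-ℓx} = e^ρ log ℓ`, so the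
probability is at most `e² ℓ^{1/2 - e^ρ} ≤ e² ℓ^{-d}`.
-/

open Real Nat Topology

theorem factorial_le_exp_one_mul_sqrt {n : ℕ} (hn : n ≠ 0) :
    (n ! : ℝ) ≤ exp 1 * √n * (n / exp 1) ^ n := by
  have hmono : Stirling.stirlingSeq n ≤ Stirling.stirlingSeq 1 := by
    obtain ⟨k, rfl⟩ := Nat.exists_eq_succ_of_ne_zero hn
    exact Stirling.stirlingSeq'_antitone (Nat.zero_le k)
  rw [Stirling.stirlingSeq_one, Stirling.stirlingSeq,
    div_le_div_iff₀ (by positivity) (by positivity), sqrt_mul zero_le_two] at hmono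
  have h2 : 0 < √2 := by positivity
  nlinarith

theorem one_sub_pow_le_exp_one_mul_exp_neg_succ_mul (m : ℕ) {t : ℝ} (ht : t ≤ 1) :
    (1 - t) ^ m ≤ exp 1 * exp (-(m + 1) * t) :=
  calc (1 - t) ^ m ≤ exp (-t) ^ m := by gcongr; linarith [add_one_le_exp (-t)]
    _ = exp t * exp (-(m + 1) * t) := by rw [← exp_nat_mul, ← exp_add]; ring_nf
    _ ≤ exp 1 * exp (-(m + 1) * t) := by gcongr

theorem factorial_mul_exp_mul_pow_le (m : ℕ) {t : ℝ} (ht : t ≤ 1) :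
    m ! * (exp (m + 1) * ((1 - t) / (m + 1)) ^ m) ≤
      exp 2 * √(m + 1) * exp (-(m + 1) * t) := by
  have hstirling : (m ! : ℝ) * exp (m + 1) / (m + 1) ^ m ≤ exp 1 * √(m + 1) := by
    have hfact : ((m + 1) ! : ℝ) ≤ exp 1 * √(m + 1) * ((m + 1) / exp 1) ^ (m + 1) := by
      exact_mod_cast factorial_le_exp_one_mul_sqrt m.succ_ne_zero
    rw [Nat.factorial_succ, Nat.cast_mul, div_pow, exp_one_pow, mul_div_assoc',
      le_div_iff₀ (by positivity), pow_succ] at hfact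
    rw [div_le_iff₀ (by positivity)]
    refine le_of_mul_le_mul_left ?_ (by positivity : (0 : ℝ) < m + 1)
    push_cast at hfact
    linarith
  calc (m ! : ℝ) * (exp (m + 1) * ((1 - t) / (m + 1)) ^ m)
      = m ! * exp (m + 1) / (m + 1) ^ m * (1 - t) ^ m := by
        rw [div_pow]; ring
    _ ≤ exp 1 * √(m + 1) * (exp 1 * exp (-(m + 1) * t)) := by
        gcongr
        exact one_sub_pow_le_exp_one_mul_exp_neg_succ_mul m ht
    _ = exp 2 * √(m + 1) * exp (-(m + 1) * t) := by
        rw [show (2 : ℝ) = 1 + 1 by norm_num, exp_add]; ring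

theorem integral_Icc_exp_neg_mul {θ : ℝ} (hθ : θ ≠ 0) {x : ℝ} (hx : 0 ≤ x) :
    ∫ t in Set.Icc 0 x, exp (-θ * t) = (1 - exp (-θ * x)) / θ := by
  rw [integral_Icc_eq_integral_Ioc, ← intervalIntegral.integral_of_le hx,
    intervalIntegral.integral_comp_mul_left exp (neg_ne_zero.2 hθ), integral_exp, mul_zero,
    exp_zero, smul_eq_mul]
  field_simp
  ring

theorem tendsto_log_div_log_atTop : Tendsto (fun x : ℝ => log (x / log x)) atTop atTop := by
  have h : Tendsto (fun x : ℝ => log x / x) atTop (𝓝[>] 0) :=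
    tendsto_nhdsWithin_iff.2 ⟨by simpa using tendsto_pow_log_div_mul_add_atTop 1 0 1 one_ne_zero,
      (eventually_gt_atTop 1).mono fun x hx => div_pos (log_pos hx) (by linarith)⟩
  simpa [Function.comp_def, inv_div] using tendsto_log_atTop.comp h.inv_tendsto_nhdsGT_zero

theorem mul_exp_neg_mul_inv_mul_log_div_log {ℓ : ℝ} (hℓ : 1 < ℓ) (ρ : ℝ) :
    ℓ * exp (-ℓ * (ℓ⁻¹ * (log (ℓ / log ℓ) - ρ))) = exp ρ * log ℓ := by
  have hlog : 0 < log ℓ := log_pos hℓ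
  rw [show -ℓ * (ℓ⁻¹ * (log (ℓ / log ℓ) - ρ)) = ρ - log (ℓ / log ℓ) by field_simp; ring,
    exp_sub, exp_log (by positivity)]
  field_simp

def spacingMap (m : ℕ) : (Fin m → ℝ) →ₗ[ℝ] (Fin m → ℝ) where
  toFun v i := v i - if h : 0 < (i : ℕ) then v ⟨i - 1, by omega⟩ else 0
  map_add' u v := by ext i; simp only [Pi.add_apply]; split_ifs <;> ring
  map_smul' c v := by
    ext i; simp only [Pi.smul_apply, smul_eq_mul, RingHom.id_apply]; split_ifs <;> ring

theorem spacingMap_apply (m : ℕ) (v : Fin m → ℝ) (i : Fin m) :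
    spacingMap m v i = v i - if h : 0 < (i : ℕ) then v ⟨i - 1, by omega⟩ else 0 :=
  rfl

theorem det_spacingMap (m : ℕ) : LinearMap.det (spacingMap m) = 1 := by
  rw [← LinearMap.det_toMatrix', Matrix.det_of_isLowerTriangular]
  · refine Finset.prod_eq_one fun i _ => ?_
    simp only [spacingMap, LinearMap.toMatrix'_apply, LinearMap.coe_mk, AddHom.coe_mk,
      Pi.single_eq_same, Pi.single_apply, Fin.ext_iff, dite_eq_ite, sub_eq_self, ite_eq_right_iff,
      one_ne_zero, imp_false]
    omega
  · intro i j hij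
    have hij : (i : ℕ) < j := OrderDual.toDual_lt_toDual.1 hij
    simp [LinearMap.toMatrix'_apply, spacingMap, Fin.ext_iff, hij.ne,
      show (i : ℕ) - 1 ≠ j by omega]

theorem sum_spacingMap (n : ℕ) (v : Fin (n + 1) → ℝ) :
    ∑ i, spacingMap (n + 1) v i = v (Fin.last n) := by
  simp only [spacingMap_apply, Finset.sum_sub_distrib]
  rw [Fin.sum_univ_castSucc, Fin.sum_univ_succ]
  simp only [Fin.coe_ofNat_eq_mod, zero_mod, lt_self_iff_false, ↓reduceDIte, Fin.val_succ,
    lt_add_iff_pos_left, Order.lt_add_one_iff, _root_.zero_le, add_tsub_cancel_right, zero_add]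
  exact add_sub_cancel_left _ _

theorem spacing_castSucc {m : ℕ} (u : Fin m → ℝ) (i : Fin m) :
    spacing u i.castSucc = spacingMap m (sortedPts u) i := by
  simp [spacing, spacingMap_apply]

def cappedSimplex (m : ℕ) (x : ℝ) : Set (Fin m → ℝ) :=
  {g | (∀ i, g i ∈ Set.Icc 0 x) ∧ ∑ i, g i ≤ 1}

theorem spacingMap_sortedPts_mem_cappedSimplex {m : ℕ} {u : Fin m → ℝ} {x : ℝ}
    (hu : ∀ i, u i ∈ Set.Icc 0 1) (hx : maxSpacing u ≤ x) :
    spacingMap m (sortedPts u) ∈ cappedSimplex m x := by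
  have hmono : Monotone (sortedPts u) := Tuple.monotone_sort u
  refine ⟨fun i => ⟨?_, ?_⟩, ?_⟩
  · rw [spacingMap_apply]
    split_ifs
    · exact sub_nonneg.2 (hmono (Fin.mk_le_mk.2 (Nat.sub_le _ _)))
    · rw [sub_zero]
      exact (hu _).1
  · rw [← spacing_castSucc]
    exact (Finset.le_sup' _ (Finset.mem_univ _)).trans hx
  · cases m with
    | zero => simp
    | succ n => rw [sum_spacingMap]; exact (hu _).2

theorem volume_cappedSimplex_le (m : ℕ) {θ x : ℝ} (hθ : 0 < θ) (hx : 0 ≤ x) :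
    volume (cappedSimplex m x) ≤ ENNReal.ofReal (exp θ * ((1 - exp (-θ * x)) / θ) ^ m) := by
  set h : ℝ → ℝ := (Set.Icc 0 x).indicator fun t => exp (-θ * t) with h_def
  set F : (Fin m → ℝ) → ℝ := fun g => exp θ * ∏ i, h (g i) with F_def
  have h_int : Integrable h := (integrable_indicator_iff measurableSet_Icc).2
    (continuous_exp.comp (continuous_const_mul _)).integrableOn_Icc
  have hF_int : Integrable F := (Integrable.fintype_prod fun _ => h_int).const_mul _
  have hF_nonneg : ∀ g, 0 ≤ F g := fun g =>
    mul_nonneg (exp_pos _).le <| Finset.prod_nonneg fun i _ =>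
      Set.indicator_nonneg (fun t _ => (exp_pos _).le) _
  have hF_ge : ∀ g ∈ cappedSimplex m x, 1 ≤ F g := by
    rintro g ⟨hg, hsum⟩
    have : F g = exp (θ * (1 - ∑ i, g i)) := by
      simp only [F_def, h_def, Set.indicator_of_mem (hg _), ← exp_sum, ← exp_add]
      rw [mul_sub, mul_one, sub_eq_add_neg, Finset.mul_sum, ← Finset.sum_neg_distrib]
      simp only [neg_mul]
    rw [this, one_le_exp_iff]
    nlinarith
  calc volume (cappedSimplex m x) ≤ volume {g | 1 ≤ ENNReal.ofReal (F g)} :=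
        measure_mono fun g hg => ENNReal.one_le_ofReal.2 (hF_ge g hg)
    _ ≤ ∫⁻ g, ENNReal.ofReal (F g) := by
        simpa using mul_meas_ge_le_lintegral₀ hF_int.aemeasurable.ennreal_ofReal 1
    _ = ENNReal.ofReal (∫ g, F g) :=
        (ofReal_integral_eq_lintegral_ofReal hF_int (ae_of_all _ hF_nonneg)).symm
    _ = ENNReal.ofReal (exp θ * ((1 - exp (-θ * x)) / θ) ^ m) := by
        rw [integral_const_mul, volume_pi, integral_fintype_prod_eq_pow, h_def,
          integral_indicator measurableSet_Icc, integral_Icc_exp_neg_mul hθ.ne' hx,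
          Fintype.card_fin]

theorem volume_preimage_comp_perm {ι β : Type*} [Fintype ι] [MeasureSpace β]
    [SigmaFinite (volume : Measure β)] (σ : Equiv.Perm ι) (s : Set (ι → β)) :
    volume ((· ∘ σ) ⁻¹' s) = volume s :=
  (volume_preserving_arrowCongr' σ.symm (MeasurableEquiv.refl β) (.id _)).measure_preimage_equiv s

theorem ppts_maxSpacing_le_le_factorial_mul (m : ℕ) (x : ℝ) :
    Ppts m {u | maxSpacing u ≤ x} ≤ m ! * volume (cappedSimplex m x) := by
  have hbox : MeasurableSet (Set.univ.pi fun _ : Fin m => Set.Icc (0 : ℝ) 1) :=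
    .univ_pi fun _ => measurableSet_Icc
  rw [Ppts, ← Measure.restrict_pi_pi, ← volume_pi, Measure.restrict_apply' hbox]
  calc volume ({u | maxSpacing u ≤ x} ∩ Set.univ.pi fun _ => Set.Icc 0 1)
      ≤ volume (⋃ σ : Equiv.Perm (Fin m), (· ∘ σ) ⁻¹' (spacingMap m ⁻¹' cappedSimplex m x)) := by
        refine measure_mono fun u ⟨hx, hu⟩ => Set.mem_iUnion.2 ⟨Tuple.sort u, ?_⟩
        exact spacingMap_sortedPts_mem_cappedSimplex (fun i => hu i trivial) hx
    _ ≤ ∑ σ : Equiv.Perm (Fin m), volume ((· ∘ σ) ⁻¹' (spacingMap m ⁻¹' cappedSimplex m x)) :=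
        measure_iUnion_fintype_le _ _
    _ = m ! * volume (cappedSimplex m x) := by
        simp [volume_preimage_comp_perm, Measure.addHaar_preimage_linearMap, det_spacingMap,
          Fintype.card_perm]

theorem toReal_ppts_maxSpacing_le_le (m : ℕ) {x : ℝ} (hx : 0 ≤ x) :
    (Ppts m {u | maxSpacing u ≤ x}).toReal ≤
      exp 2 * √(m + 1) * exp (-(m + 1) * exp (-(m + 1) * x)) := by
  have ht : exp (-(m + 1) * x) ≤ 1 := exp_le_one_iff.2 (by nlinarith)
  refine ENNReal.toReal_le_of_le_ofReal (by positivity) ?_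
  calc Ppts m {u | maxSpacing u ≤ x} ≤ m ! * volume (cappedSimplex m x) :=
        ppts_maxSpacing_le_le_factorial_mul m x
    _ ≤ m ! * ENNReal.ofReal (exp (m + 1) * ((1 - exp (-(m + 1) * x)) / (m + 1)) ^ m) := by
        gcongr
        exact volume_cappedSimplex_le m (by positivity) hx
    _ = ENNReal.ofReal (m ! * (exp (m + 1) * ((1 - exp (-(m + 1) * x)) / (m + 1)) ^ m)) := by
        rw [ENNReal.ofReal_mul (Nat.cast_nonneg _), ENNReal.ofReal_natCast]
    _ ≤ _ := ENNReal.ofReal_le_ofReal (factorial_mul_exp_mul_pow_le m ht)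

theorem maxSpacing_lower_tail_general (ρ : ℝ) (d : ℝ)
    (hd : d < Real.exp ρ - 1) :
    ∃ C : ℝ, ∀ᶠ m : ℕ in atTop,
      (Ppts m {u | maxSpacing u ≤
          ((m + 1 : ℝ))⁻¹ * (Real.log ((m + 1 : ℝ) / Real.log (m + 1 : ℝ)) - ρ)}).toReal
        ≤ C * ((m + 1 : ℝ)) ^ (-d) := by
  refine ⟨exp 2, ?_⟩
  have hℓ : Tendsto (fun m : ℕ => (m + 1 : ℝ)) atTop atTop :=
    tendsto_atTop_add_const_right _ 1 tendsto_natCast_atTop_atTop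
  filter_upwards [(tendsto_log_div_log_atTop.comp hℓ).eventually_ge_atTop ρ,
    hℓ.eventually_gt_atTop 1] with m hρ hℓ1
  set ℓ : ℝ := m + 1
  have hx : 0 ≤ ℓ⁻¹ * (log (ℓ / log ℓ) - ρ) := mul_nonneg (by positivity) (sub_nonneg.2 hρ)
  calc _ ≤ exp 2 * √ℓ * exp (-ℓ * exp (-ℓ * (ℓ⁻¹ * (log (ℓ / log ℓ) - ρ)))) :=
        toReal_ppts_maxSpacing_le_le m hx
    _ = exp 2 * ℓ ^ (1 / 2 - exp ρ) := by
        rw [neg_mul, mul_exp_neg_mul_inv_mul_log_div_log hℓ1, sqrt_eq_rpow,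
          rpow_sub (by positivity), rpow_def_of_pos (by positivity) (exp ρ), mul_comm (log ℓ),
          exp_neg, div_eq_mul_inv]
        ring
    _ ≤ exp 2 * ℓ ^ (-d) := by
        gcongr
        · exact hℓ1.le
        · linarith

/-- For the maximal spacing `L_ℓ⁺` of `ℓ-1` i.i.d. uniform points (here `ℓ = m+1`):
for every `ρ > 0` and `d ∈ (0, e^ρ - 1)`,
`P(L_ℓ⁺ ≤ ℓ⁻¹(log(ℓ/log ℓ) - ρ)) = O(ℓ^{-d})` as `ℓ → ∞`. -/
theorem maxSpacing_lower_tail (ρ : ℝ) (hρ : 0 < ρ) (d : ℝ) (hd0 : 0 < d)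
    (hd : d < Real.exp ρ - 1) :
    ∃ C : ℝ, ∀ᶠ m : ℕ in atTop,
      (Ppts m {u | maxSpacing u ≤
          ((m + 1 : ℝ))⁻¹ * (Real.log ((m + 1 : ℝ) / Real.log (m + 1 : ℝ)) - ρ)}).toReal
        ≤ C * ((m + 1 : ℝ)) ^ (-d) :=
  maxSpacing_lower_tail_general ρ d hd
end

section
/- For n ≥ 2 let Φₙ(η) = n log(1 - e^{-η}) - log η on (0, ∞). Then Φₙ'(η) = n/(e^η - 1) - 1/η and Φₙ''(η) = -n/(e^{η/2} - e^{-η/2})² + 1/η². Moreover, for all sufficiently large n, Φₙ is increasing and concave on the interval (0, (log n)/2]. -/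
/-!
Both sign conditions follow from `eˣ - 1 ≤ x eˣ`. For `0 < η ≤ (log n)/2` we have
`e^η < e^{2η} ≤ n`, hence `e^η - 1 ≤ η e^η < n η`, which is `Φₙ' > 0`; and
`e^{η/2} - e^{-η/2} = e^{-η/2} (e^η - 1) ≤ η e^{η/2}`, so that
`(e^{η/2} - e^{-η/2})² ≤ η² e^η ≤ n η²`, which is `Φₙ'' ≤ 0`.
-/

open Real Set

noncomputable section

def phi (n η : ℝ) : ℝ := n * log (1 - exp (-η)) - log η

def phiDeriv (n η : ℝ) : ℝ := n / (exp η - 1) - 1 / η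

def phiDeriv2 (n η : ℝ) : ℝ := -n / (exp (η / 2) - exp (-(η / 2))) ^ 2 + 1 / η ^ 2

end

lemma exp_sub_one_le_mul_exp (x : ℝ) : exp x - 1 ≤ x * exp x := by
  have h := mul_le_mul_of_nonneg_right (one_sub_le_exp_neg x) (exp_pos x).le
  rw [← exp_add, neg_add_cancel, exp_zero, sub_mul, one_mul] at h
  linarith

lemma exp_half_sub_exp_neg_half (x : ℝ) :
    exp (x / 2) - exp (-(x / 2)) = exp (-(x / 2)) * (exp x - 1) := by
  rw [mul_sub, mul_one, ← exp_add]
  ring_nf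

lemma exp_half_sub_exp_neg_half_le (x : ℝ) :
    exp (x / 2) - exp (-(x / 2)) ≤ x * exp (x / 2) := by
  calc exp (x / 2) - exp (-(x / 2)) = exp (-(x / 2)) * (exp x - 1) :=
        exp_half_sub_exp_neg_half x
    _ ≤ exp (-(x / 2)) * (x * exp x) := by gcongr; exact exp_sub_one_le_mul_exp x
    _ = x * exp (x / 2) := by
        rw [mul_left_comm, ← exp_add]
        ring_nf

lemma exp_sub_one_ne_zero {x : ℝ} (hx : x ≠ 0) : exp x - 1 ≠ 0 := by
  rwa [sub_ne_zero, Ne, exp_eq_one_iff]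

lemma exp_lt_of_le_log_div_two {n x : ℝ} (hn : 0 < n) (hx : 0 < x) (h : x ≤ log n / 2) :
    exp x < n :=
  calc exp x < exp (2 * x) := exp_lt_exp.2 (by linarith)
    _ ≤ exp (log n) := exp_le_exp.2 (by linarith)
    _ = n := exp_log hn

lemma hasDerivAt_phi (n : ℝ) {η : ℝ} (hη : η ≠ 0) : HasDerivAt (phi n) (phiDeriv n η) η := by
  have he : exp η - 1 ≠ 0 := exp_sub_one_ne_zero hη
  have h1 : 1 - exp (-η) ≠ 0 := by
    rwa [sub_ne_zero, ne_comm, Ne, exp_eq_one_iff, neg_eq_zero]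
  have hinner : HasDerivAt (fun η => 1 - exp (-η)) (exp (-η)) η := by
    simpa using ((hasDerivAt_neg η).exp).const_sub 1
  refine (((hinner.log h1).const_mul n).sub (hasDerivAt_log hη)).congr_deriv ?_
  rw [exp_neg] at h1 ⊢
  unfold phiDeriv
  field_simp

lemma hasDerivAt_phiDeriv (n : ℝ) {η : ℝ} (hη : η ≠ 0) :
    HasDerivAt (phiDeriv n) (phiDeriv2 n η) η := by
  have he : exp η - 1 ≠ 0 := exp_sub_one_ne_zero hη
  have hquot : HasDerivAt (fun η => n / (exp η - 1)) (-(n * exp η) / (exp η - 1) ^ 2) η :=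
    ((hasDerivAt_const η n).div ((hasDerivAt_exp η).sub_const 1) he).congr_deriv (by ring)
  have hinv : HasDerivAt (fun η => 1 / η) (-(1 / η ^ 2)) η := by
    simpa [one_div] using hasDerivAt_inv hη
  refine (hquot.sub hinv).congr_deriv ?_
  have hsq : exp η = (exp (-(η / 2)))⁻¹ ^ 2 := by
    rw [← exp_neg, neg_neg, ← exp_nat_mul]; ring_nf
  unfold phiDeriv2
  rw [exp_half_sub_exp_neg_half, hsq]
  field_simp
  ring

lemma phiDeriv_pos {n η : ℝ} (hη : 0 < η) (hexp : exp η < n) : 0 < phiDeriv n η := by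
  have he : 0 < exp η - 1 := by linarith [add_one_lt_exp hη.ne']
  have hlt : exp η - 1 < n * η := by nlinarith [exp_sub_one_le_mul_exp η]
  rw [phiDeriv, sub_pos, div_lt_div_iff₀ hη he]
  linarith

lemma phiDeriv2_nonpos {n η : ℝ} (hη : 0 < η) (hexp : exp η ≤ n) : phiDeriv2 n η ≤ 0 := by
  unfold phiDeriv2
  set s := exp (η / 2) - exp (-(η / 2))
  have hs : 0 < s := sub_pos.2 (exp_lt_exp.2 (by linarith))
  have hsq : s ^ 2 ≤ n * η ^ 2 :=
    calc s ^ 2 ≤ (η * exp (η / 2)) ^ 2 := by gcongr; exact exp_half_sub_exp_neg_half_le η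
      _ = exp η * η ^ 2 := by rw [mul_pow, ← exp_nat_mul]; ring_nf
      _ ≤ n * η ^ 2 := by gcongr
  rw [neg_div, neg_add_nonpos_iff, div_le_div_iff₀ (by positivity) (by positivity)]
  linarith

lemma continuousOn_phi (n : ℝ) : ContinuousOn (phi n) (Ioi 0) :=
  fun _ hx => (hasDerivAt_phi n (ne_of_gt hx)).continuousAt.continuousWithinAt

lemma strictMonoOn_phi {n : ℝ} (hn : 0 < n) : StrictMonoOn (phi n) (Ioc 0 (log n / 2)) := by
  apply strictMonoOn_of_hasDerivWithinAt_pos (f' := phiDeriv n) (convex_Ioc _ _)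
    ((continuousOn_phi n).mono Ioc_subset_Ioi_self)
  all_goals simp only [interior_Ioc]
  · exact fun x hx => (hasDerivAt_phi n hx.1.ne').hasDerivWithinAt
  · exact fun x hx => phiDeriv_pos hx.1 (exp_lt_of_le_log_div_two hn hx.1 hx.2.le)

lemma concaveOn_phi {n : ℝ} (hn : 0 < n) : ConcaveOn ℝ (Ioc 0 (log n / 2)) (phi n) := by
  apply concaveOn_of_hasDerivWithinAt2_nonpos (f' := phiDeriv n) (f'' := phiDeriv2 n)
    (convex_Ioc _ _) ((continuousOn_phi n).mono Ioc_subset_Ioi_self)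
  all_goals simp only [interior_Ioc]
  · exact fun x hx => (hasDerivAt_phi n hx.1.ne').hasDerivWithinAt
  · exact fun x hx => (hasDerivAt_phiDeriv n hx.1.ne').hasDerivWithinAt
  · exact fun x hx => phiDeriv2_nonpos hx.1 (exp_lt_of_le_log_div_two hn hx.1 hx.2.le).le

/-- For `n ≥ 2` let `Φₙ(η) = n log(1 - e^{-η}) - log η` on `(0,∞)`. Then
`Φₙ'(η) = n/(e^η - 1) - 1/η`, `Φₙ''(η) = -n/(e^{η/2} - e^{-η/2})² + 1/η²`, and for all
sufficiently large `n`, `Φₙ` is increasing and concave on `(0, (log n)/2]`. -/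
theorem Phi_derivs_monotone_concave :
    (∀ n : ℕ, 2 ≤ n → ∀ η : ℝ, 0 < η →
      HasDerivAt (fun η : ℝ => (n : ℝ) * Real.log (1 - Real.exp (-η)) - Real.log η)
        ((n : ℝ) / (Real.exp η - 1) - 1 / η) η) ∧
    (∀ n : ℕ, 2 ≤ n → ∀ η : ℝ, 0 < η →
      HasDerivAt (fun η : ℝ => (n : ℝ) / (Real.exp η - 1) - 1 / η)
        (-(n : ℝ) / (Real.exp (η / 2) - Real.exp (-(η / 2))) ^ 2 + 1 / η ^ 2) η) ∧
    (∃ N : ℕ, ∀ n : ℕ, N ≤ n →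
      StrictMonoOn (fun η : ℝ => (n : ℝ) * Real.log (1 - Real.exp (-η)) - Real.log η)
        (Set.Ioc 0 (Real.log n / 2)) ∧
      ConcaveOn ℝ (Set.Ioc 0 (Real.log n / 2))
        (fun η : ℝ => (n : ℝ) * Real.log (1 - Real.exp (-η)) - Real.log η)) := by
  refine ⟨fun n _ η hη => hasDerivAt_phi n hη.ne', fun n _ η hη => hasDerivAt_phiDeriv n hη.ne',
    1, fun n hn => ?_⟩
  have hn : (0 : ℝ) < n := by exact_mod_cast hn
  exact ⟨strictMonoOn_phi hn, concaveOn_phi hn⟩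
end

section
/- For every s > 0 and n ≥ 1, ∫_0^{ps} exp(-η - 2η²/n) dη ≥ (1 - e^{-ps}) e^{-4/n} for all p > 0. -/
/-!
Since `exp x ≥ 1 + x`, the tangent line of `t ↦ exp (-c t)` at `t = 2` gives
`exp (-c η²) ≥ exp (-2c) (1 + 2c - c η²)`. Integrating against `exp (-η) dη` over `[0, T]`
turns this into the Jensen bound, because `∫₀ᵀ η² exp (-η) dη ≤ 2 (1 - exp (-T))`: the
`η²`-moment of the truncated exponential distribution is at most `2`.
-/

open Real intervalIntegral

theorem integral_exp_neg_zero (T : ℝ) : ∫ η in (0 : ℝ)..T, exp (-η) = 1 - exp (-T) := by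
  rw [integral_comp_neg (fun η => exp η), integral_exp, neg_zero, exp_zero]

theorem integral_sq_mul_exp_neg (T : ℝ) :
    ∫ η in (0 : ℝ)..T, η ^ 2 * exp (-η) = 2 - (T ^ 2 + 2 * T + 2) * exp (-T) := by
  have hderiv (η : ℝ) :
      HasDerivAt (fun x => -(x ^ 2 + 2 * x + 2) * exp (-x)) (η ^ 2 * exp (-η)) η := by
    refine (((((hasDerivAt_id' η).pow 2).add ((hasDerivAt_id' η).const_mul 2)).add_const 2).neg.mul
      (hasDerivAt_neg η).exp).congr_deriv ?_
    simp only [Pi.neg_apply, Pi.add_apply, Pi.pow_apply, Nat.cast_ofNat]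
    ring
  rw [integral_eq_sub_of_hasDerivAt (fun η _ => hderiv η)
    (Continuous.intervalIntegrable (by fun_prop) _ _)]
  simp only [neg_zero, exp_zero]
  ring

theorem integral_sq_mul_exp_neg_le {T : ℝ} (hT : 0 ≤ T) :
    ∫ η in (0 : ℝ)..T, η ^ 2 * exp (-η) ≤ 2 * (1 - exp (-T)) := by
  rw [integral_sq_mul_exp_neg]
  nlinarith [exp_pos (-T)]

theorem mul_sub_mul_sq_le_exp_neg_mul_sq (c η : ℝ) :
    exp (-(2 * c)) * (1 + 2 * c - c * η ^ 2) ≤ exp (-(c * η ^ 2)) :=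
  calc exp (-(2 * c)) * (1 + 2 * c - c * η ^ 2)
      ≤ exp (-(2 * c)) * exp (2 * c - c * η ^ 2) := by
        gcongr
        linarith [add_one_le_exp (2 * c - c * η ^ 2)]
    _ = exp (-(c * η ^ 2)) := by rw [← exp_add]; ring_nf

theorem integral_exp_neg_sub_mul_sq_ge {c T : ℝ} (hc : 0 ≤ c) (hT : 0 ≤ T) :
    (1 - exp (-T)) * exp (-(2 * c)) ≤ ∫ η in (0 : ℝ)..T, exp (-η - c * η ^ 2) := by
  have hint {f : ℝ → ℝ} (hf : Continuous f) : IntervalIntegrable f MeasureTheory.volume 0 T :=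
    hf.intervalIntegrable _ _
  calc (1 - exp (-T)) * exp (-(2 * c))
      = exp (-(2 * c)) * ((1 + 2 * c) * (1 - exp (-T)) - c * (2 * (1 - exp (-T)))) := by ring
    _ ≤ exp (-(2 * c)) *
          ((1 + 2 * c) * (1 - exp (-T)) - c * ∫ η in (0 : ℝ)..T, η ^ 2 * exp (-η)) := by
        gcongr
        exact integral_sq_mul_exp_neg_le hT
    _ = ∫ η in (0 : ℝ)..T,
          exp (-(2 * c)) * (1 + 2 * c) * exp (-η) - exp (-(2 * c)) * c * (η ^ 2 * exp (-η)) := by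
        rw [integral_sub (hint (by fun_prop)) (hint (by fun_prop)), integral_const_mul,
          integral_const_mul, integral_exp_neg_zero]
        ring
    _ = ∫ η in (0 : ℝ)..T, exp (-η) * (exp (-(2 * c)) * (1 + 2 * c - c * η ^ 2)) := by
        congr 1
        ext η
        ring
    _ ≤ ∫ η in (0 : ℝ)..T, exp (-η - c * η ^ 2) := by
        refine integral_mono_on hT (hint (by fun_prop)) (hint (by fun_prop)) fun η _ => ?_
        rw [sub_eq_add_neg (-η), exp_add]
        gcongr
        exact mul_sub_mul_sq_le_exp_neg_mul_sq c η

theorem integral_exp_quadratic_lower_general (s : ℝ) (hs : 0 < s) (n : ℕ)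
    (p : ℝ) (hp : 0 < p) :
    (1 - Real.exp (-(p * s))) * Real.exp (-(4 / n)) ≤
      ∫ η in (0 : ℝ)..(p * s), Real.exp (-η - 2 * η ^ 2 / n) := by
  convert integral_exp_neg_sub_mul_sq_ge (c := 2 / n) (by positivity) (mul_pos hp hs).le using 2
  · ring_nf
  · ext η
    ring_nf

/-- For every `s > 0`, `n ≥ 1` and `p > 0`,
`∫₀^{ps} exp(-η - 2η²/n) dη ≥ (1 - e^{-ps}) e^{-4/n}`. -/
theorem integral_exp_quadratic_lower (s : ℝ) (hs : 0 < s) (n : ℕ) (hn : 1 ≤ n)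
    (p : ℝ) (hp : 0 < p) :
    (1 - Real.exp (-(p * s))) * Real.exp (-(4 / n)) ≤
      ∫ η in (0 : ℝ)..(p * s), Real.exp (-η - 2 * η ^ 2 / n) :=
  integral_exp_quadratic_lower_general s hs n p hp
end
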